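/- arXiv:1711.10646 — 4 statements merged into one kernel-verified Lean document; each statement's English description precedes it below -/
import Mathlib

section
/- For all integers p ≥ 1 and K, K′ with p ≤ K < K′, one has a₀(K′,p)² < a₀(K,p)²; i.e., since a₀(K,p) is negative and strictly increasing in K, its square strictly decreases in K. -/
/-- The `m`-th harmonic number `H_m = ∑_{i=1}^m 1/i` (with `H_0 = 0`), as a real number. -/
noncomputable def harmonicR (m : ℕ) : ℝ := ∑ i ∈ Finset.range m, (1 : ℝ) / (i + 1)

/-- The digamma function at a positive integer `n`: `ψ(n) = H_{n-1} - γ`. -/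
noncomputable def digammaNat (n : ℕ) : ℝ := harmonicR (n - 1) - Real.eulerMascheroniConstant

/-- `a₀(K, p) = (1/p) ∑_{j=1}^p ψ(K+1-j) - log K`. -/
noncomputable def a0 (K p : ℕ) : ℝ :=
  (1 / (p : ℝ)) * ∑ j ∈ Finset.Icc 1 p, digammaNat (K + 1 - j) - Real.log K

/-!
Since `p ≠ 0`, `a₀(K,p)` is the average over `1 ≤ j ≤ p` of `ψ(K+1-j) - log K`. Each term is
negative because `ψ(n) = H_{n-1} - γ < log n`, and it increases when `K` grows by one: `ψ` gains
`1/(K+1-j) ≥ 1/K`, while `log` gains less than `1/K` (monotonicity of `H_n - log (n+1)`).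
So `a₀(·,p)` is negative and strictly increasing on `K ≥ p`, and its square strictly decreases.
-/

open Finset Real

lemma harmonicR_eq_harmonic (n : ℕ) : harmonicR n = harmonic n := by
  simp [harmonicR, harmonic, one_div]

lemma digammaNat_succ {n : ℕ} (hn : n ≠ 0) : digammaNat (n + 1) = digammaNat n + 1 / n := by
  obtain ⟨m, rfl⟩ := Nat.exists_eq_succ_of_ne_zero hn
  simp only [digammaNat, harmonicR, Nat.succ_sub_one, sum_range_succ]
  push_cast
  ring

lemma digammaNat_lt_log {n : ℕ} (hn : n ≠ 0) : digammaNat n < log n := by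
  obtain ⟨m, rfl⟩ := Nat.exists_eq_succ_of_ne_zero hn
  have h := eulerMascheroniSeq_lt_eulerMascheroniConstant m
  rw [eulerMascheroniSeq] at h
  rw [digammaNat, Nat.succ_sub_one, harmonicR_eq_harmonic]
  push_cast
  linarith

lemma log_succ_sub_log_lt {n : ℕ} (hn : n ≠ 0) : log (n + 1) - log n < 1 / n := by
  obtain ⟨m, rfl⟩ := Nat.exists_eq_succ_of_ne_zero hn
  have h := strictMono_eulerMascheroniSeq m.lt_succ_self
  simp only [eulerMascheroniSeq, harmonic_succ] at h
  push_cast at h ⊢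
  rw [one_div]
  linarith

lemma digammaNat_lt_log_of_le {m K : ℕ} (hm : m ≠ 0) (hmK : m ≤ K) : digammaNat m < log K :=
  (digammaNat_lt_log hm).trans_le <|
    log_le_log (by positivity) (by exact_mod_cast hmK)

lemma digammaNat_sub_log_lt_succ {m K : ℕ} (hm : m ≠ 0) (hmK : m ≤ K) :
    digammaNat m - log K < digammaNat (m + 1) - log ((K + 1 : ℕ) : ℝ) := by
  have hlog := log_succ_sub_log_lt (n := K) (by omega)
  have hinv : 1 / (K : ℝ) ≤ 1 / m :=
    one_div_le_one_div_of_le (by positivity) (by exact_mod_cast hmK)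
  rw [digammaNat_succ hm]
  push_cast
  linarith

lemma a0_eq_sum_div {p : ℕ} (hp : p ≠ 0) (K : ℕ) :
    a0 K p = (∑ j ∈ Icc 1 p, (digammaNat (K + 1 - j) - log K)) / p := by
  rw [a0, sum_sub_distrib, sum_const, Nat.card_Icc, Nat.add_sub_cancel, nsmul_eq_mul]
  field_simp

lemma a0_neg {p K : ℕ} (hp : p ≠ 0) (hK : p ≤ K) : a0 K p < 0 := by
  rw [a0_eq_sum_div hp]
  refine div_neg_of_neg_of_pos (sum_neg (fun j hj => ?_) ⟨1, mem_Icc.2 ⟨le_rfl, by omega⟩⟩) (by positivity)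
  rw [mem_Icc] at hj
  exact sub_neg.2 (digammaNat_lt_log_of_le (by omega) (by omega))

lemma a0_lt_a0_succ {p K : ℕ} (hp : p ≠ 0) (hK : p ≤ K) : a0 K p < a0 (K + 1) p := by
  rw [a0_eq_sum_div hp, a0_eq_sum_div hp]
  refine div_lt_div_of_pos_right (sum_lt_sum_of_nonempty ⟨1, mem_Icc.2 ⟨le_rfl, by omega⟩⟩ fun j hj => ?_)
    (by positivity)
  rw [mem_Icc] at hj
  rw [show K + 1 + 1 - j = K + 1 - j + 1 by omega]
  exact digammaNat_sub_log_lt_succ (by omega) (by omega)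

lemma a0_strictMonoOn {p : ℕ} (hp : p ≠ 0) : StrictMonoOn (a0 · p) (Set.Ici p) :=
  strictMonoOn_of_lt_succ Set.ordConnected_Ici fun K _ hK _ => by
    simpa only [Order.succ_eq_add_one] using a0_lt_a0_succ hp hK

/-- For all integers `p ≥ 1` and `K, K'` with `p ≤ K < K'`, `a₀(K', p)² < a₀(K, p)²`. -/
theorem a0_sq_strictAnti (p K K' : ℕ) (hp : 1 ≤ p) (hK : p ≤ K) (hKK : K < K') :
    (a0 K' p) ^ 2 < (a0 K p) ^ 2 := by
  have hp0 : p ≠ 0 := Nat.one_le_iff_ne_zero.1 hp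
  have hlt : a0 K p < a0 K' p := a0_strictMonoOn hp0 hK (hK.trans hKK.le) hKK
  have hneg : a0 K' p < 0 := a0_neg hp0 (hK.trans hKK.le)
  rw [← neg_sq (a0 K p)]
  exact sq_lt_sq' (by linarith) (by linarith)
end

section
/- Let K be a positive integer and let S be a real random variable with law Gamma(K,K). Then the variance of log S equals ψ′(K) = π²/6 − ∑_{j=1}^{K−1} 1/j²; that is, E[(log S)²] − (E[log S])² = π²/6 − ∑_{j=1}^{K−1} 1/j². -/
/-!
If `X ~ Gamma(K, 1)` then `S = X / K`, so `log S` and `log X` differ by a constant and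
`Var(log S) = Γ''(K)/Γ(K) - (Γ'(K)/Γ(K))² = ψ'(K)` with `ψ = Γ'/Γ`; the derivatives of `Γ` are
the integrals `∫ t^(s-1) (log t)^m e^(-t) dt`, obtained by differentiating under the Mellin
integral.
The function `ψ` is monotone (log-convexity of `Γ`) and satisfies `ψ(x + 1) = ψ(x) + 1/x`, which
forces `ψ(x) = ψ(1) + ∑ₙ (1/(n+1) - 1/(n+x))`. Differentiating termwise,
`ψ'(K) = ∑ₙ 1/(n+K)² = ζ(2) - ∑_{j<K} 1/j²`.
-/

open MeasureTheory ProbabilityTheory Real Set Filter Topology Asymptotics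

theorem mellin_ofReal (g : ℝ → ℝ) (x : ℝ) :
    mellin (fun t ↦ (g t : ℂ)) x = ((∫ t in Ioi 0, t ^ (x - 1) * g t : ℝ) : ℂ) := by
  refine Eq.trans (setIntegral_congr_fun measurableSet_Ioi fun t ht ↦ ?_) integral_ofReal
  change _ = ((t ^ (x - 1) * g t : ℝ) : ℂ)
  rw [smul_eq_mul, Complex.ofReal_mul, Complex.ofReal_cpow (le_of_lt ht), Complex.ofReal_sub,
    Complex.ofReal_one]

theorem isBigO_atTop_log_pow_mul_exp_neg (m : ℕ) (a : ℝ) :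
    (fun t ↦ log t ^ m * exp (-t)) =O[atTop] (· ^ (-a)) := by
  induction m generalizing a with
  | zero => simpa using (isLittleO_exp_neg_mul_rpow_atTop one_pos (-a)).isBigO
  | succ m ih =>
    refine (isBigO_rpow_top_log_smul (lt_add_one a) (ih (a + 1))).congr_left fun t ↦ ?_
    rw [smul_eq_mul, pow_succ]
    ring

theorem isBigO_nhdsGT_log_pow_mul_exp_neg (m : ℕ) {b : ℝ} (hb : 0 < b) :
    (fun t ↦ log t ^ m * exp (-t)) =O[𝓝[>] 0] (· ^ (-b)) := by
  induction m generalizing b with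
  | zero =>
    have hexp : (fun t ↦ exp (-t)) =O[𝓝[>] (0 : ℝ)] (fun _ ↦ (1 : ℝ)) :=
      isBigO_const_of_tendsto (((continuous_exp.comp continuous_neg).tendsto' 0 1
        (by simp)).mono_left nhdsWithin_le_nhds) one_ne_zero
    refine (hexp.trans (IsBigO.of_bound 1 ?_)).congr_left fun t ↦ by simp
    filter_upwards [Ioo_mem_nhdsGT one_pos] with t ht
    rw [norm_one, one_mul, norm_of_nonneg (rpow_nonneg ht.1.le _)]
    exact one_le_rpow_of_pos_of_le_one_of_nonpos ht.1 ht.2.le (by linarith)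
  | succ m ih =>
    refine (isBigO_rpow_zero_log_smul (half_lt_self hb) (ih (half_pos hb))).congr_left fun t ↦ ?_
    rw [smul_eq_mul, pow_succ]
    ring

theorem continuousOn_log_pow_mul_exp_neg (m : ℕ) :
    ContinuousOn (fun t ↦ log t ^ m * exp (-t)) (Ioi 0) := by
  fun_prop (disch := simp_all [ne_of_gt])

noncomputable def gammaLogMoment (m : ℕ) (s : ℝ) : ℝ :=
  ∫ t in Ioi 0, t ^ (s - 1) * (log t ^ m * exp (-t))

theorem integrableOn_gammaLogMoment (m : ℕ) {s : ℝ} (hs : 0 < s) :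
    IntegrableOn (fun t ↦ t ^ (s - 1) * (log t ^ m * exp (-t))) (Ioi 0) :=
  mellin_convergent_of_isBigO_scalar
    ((continuousOn_log_pow_mul_exp_neg m).locallyIntegrableOn measurableSet_Ioi)
    (isBigO_atTop_log_pow_mul_exp_neg m (s + 1)) (lt_add_one s)
    (isBigO_nhdsGT_log_pow_mul_exp_neg m (half_pos hs)) (half_lt_self hs)

theorem gammaLogMoment_zero {s : ℝ} (hs : 0 < s) : gammaLogMoment 0 s = Gamma s := by
  rw [Gamma_eq_integral hs, gammaLogMoment]
  simp_rw [pow_zero, one_mul, mul_comm]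

theorem hasDerivAt_gammaLogMoment (m : ℕ) {s : ℝ} (hs : 0 < s) :
    HasDerivAt (gammaLogMoment m) (gammaLogMoment (m + 1) s) s := by
  let F (m : ℕ) (t : ℝ) : ℂ := (log t ^ m * exp (-t) : ℝ)
  have hF : (fun t ↦ log t • F m t) = F (m + 1) := by
    ext t
    simp only [F, Complex.real_smul]
    push_cast
    ring
  have hmellin := (mellin_hasDerivAt_of_isBigO_rpow (f := F m) (s := s)
    ((Complex.continuous_ofReal.comp_continuousOn
      (continuousOn_log_pow_mul_exp_neg m)).locallyIntegrableOn measurableSet_Ioi)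
    ((Complex.ofRealCLM.isBigO_comp _ _).trans (isBigO_atTop_log_pow_mul_exp_neg m (s + 1)))
    (by simp) ((Complex.ofRealCLM.isBigO_comp _ _).trans
      (isBigO_nhdsGT_log_pow_mul_exp_neg m (half_pos hs))) (by simpa using half_lt_self hs)).2
  rw [hF] at hmellin
  have h := hmellin.real_of_complex
  simp only [F, mellin_ofReal, Complex.ofReal_re] at h
  exact h

theorem hasDerivAt_Gamma_gammaLogMoment {s : ℝ} (hs : 0 < s) :
    HasDerivAt Gamma (gammaLogMoment 1 s) s := by
  refine (hasDerivAt_gammaLogMoment 0 hs).congr_of_eventuallyEq ?_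
  filter_upwards [Ioi_mem_nhds hs] with y hy using (gammaLogMoment_zero hy).symm

noncomputable def digammaReal (s : ℝ) : ℝ := gammaLogMoment 1 s / Gamma s

theorem hasDerivAt_log_Gamma {s : ℝ} (hs : 0 < s) :
    HasDerivAt (fun y ↦ log (Gamma y)) (digammaReal s) s :=
  (hasDerivAt_Gamma_gammaLogMoment hs).log (Gamma_pos_of_pos hs).ne'

theorem digammaReal_add_one {s : ℝ} (hs : 0 < s) :
    digammaReal (s + 1) = digammaReal s + s⁻¹ := by
  have hshift : HasDerivAt (fun y ↦ log (Gamma (y + 1))) (digammaReal (s + 1)) s := by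
    simpa using (hasDerivAt_log_Gamma (by linarith : 0 < s + 1)).comp_add_const s 1
  have hsplit : HasDerivAt (fun y ↦ log (Gamma y) + log y) (digammaReal s + s⁻¹) s :=
    (hasDerivAt_log_Gamma hs).add (hasDerivAt_log hs.ne')
  refine hshift.unique (hsplit.congr_of_eventuallyEq ?_)
  filter_upwards [Ioi_mem_nhds hs] with y (hy : 0 < y)
  rw [Gamma_add_one hy.ne', log_mul hy.ne' (Gamma_pos_of_pos hy).ne', add_comm]

theorem monotoneOn_digammaReal : MonotoneOn digammaReal (Ioi 0) := by
  have hderiv : EqOn (deriv (log ∘ Gamma)) digammaReal (Ioi 0) := fun y hy ↦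
    (hasDerivAt_log_Gamma hy).deriv
  refine (convexOn_log_Gamma.monotoneOn_deriv fun y hy ↦
    (hasDerivAt_log_Gamma hy).differentiableAt).congr hderiv

theorem hasDerivAt_digammaReal {s : ℝ} (hs : 0 < s) :
    HasDerivAt digammaReal (gammaLogMoment 2 s / Gamma s - digammaReal s ^ 2) s := by
  have hG : Gamma s ≠ 0 := (Gamma_pos_of_pos hs).ne'
  refine ((hasDerivAt_gammaLogMoment 1 hs).div (hasDerivAt_Gamma_gammaLogMoment hs)
    hG).congr_deriv ?_
  simp only [digammaReal]
  field_simp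

section MonotoneShift

variable {f : ℝ → ℝ}

theorem add_natCast_eq_add_sum (hrec : ∀ x, 0 < x → f (x + 1) = f x + x⁻¹) {x : ℝ} (hx : 0 < x)
    (n : ℕ) :
    f (x + n) = f x + ∑ k ∈ Finset.range n, ((k : ℝ) + x)⁻¹ := by
  induction n with
  | zero => simp
  | succ n ih =>
    rw [Nat.cast_succ, ← add_assoc, hrec _ (by positivity), ih, Finset.sum_range_succ, add_comm x,
      add_assoc]

theorem tendsto_sub_add_natCast (hrec : ∀ x, 0 < x → f (x + 1) = f x + x⁻¹)
    (hmono : MonotoneOn f (Ioi 0)) {x y : ℝ} (hx : 0 < x) (hy : 0 < y) :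
    Tendsto (fun n : ℕ ↦ f (x + n) - f (y + n)) atTop (𝓝 0) := by
  set c := ⌈x⌉₊ + ⌈y⌉₊
  -- `x + n` and `y + n` lie in `[n, n + c]`, across which `f` grows by `∑_{k<c} 1/(k+n) → 0`.
  have hwidth : Tendsto (fun n : ℕ ↦ f (n + c) - f n) atTop (𝓝 0) := by
    have hsum := tendsto_finsetSum (Finset.range c) fun k _ ↦
      tendsto_inv_atTop_zero.comp
        (tendsto_atTop_add_const_left _ (k : ℝ) tendsto_natCast_atTop_atTop)
    simp only [Finset.sum_const_zero] at hsum
    refine hsum.congr' ?_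
    filter_upwards [eventually_gt_atTop 0] with n hn
    rw [add_natCast_eq_add_sum hrec (Nat.cast_pos.mpr hn)]
    simp
  have hbounds : ∀ᶠ n : ℕ in atTop, ∀ z : ℝ, 0 < z → z ≤ c →
      f n ≤ f (z + n) ∧ f (z + n) ≤ f (n + c) := by
    filter_upwards [eventually_gt_atTop 0] with n hn z hz hzc
    have hn' : (0 : ℝ) < n := Nat.cast_pos.mpr hn
    exact ⟨hmono hn' (by simp only [mem_Ioi]; positivity) (by linarith),
      hmono (by simp only [mem_Ioi]; positivity) (by simp only [mem_Ioi]; positivity)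
        (by linarith)⟩
  have hxc : x ≤ c := (Nat.le_ceil x).trans (by simp [c])
  have hyc : y ≤ c := (Nat.le_ceil y).trans (by simp [c])
  refine tendsto_of_tendsto_of_tendsto_of_le_of_le' (by simpa using hwidth.neg) hwidth ?_ ?_
  · filter_upwards [hbounds] with n hn
    linarith [hn x hx hxc, hn y hy hyc]
  · filter_upwards [hbounds] with n hn
    linarith [hn x hx hxc, hn y hy hyc]

theorem eq_add_tsum_inv_sub_inv (hrec : ∀ x, 0 < x → f (x + 1) = f x + x⁻¹)
    (hmono : MonotoneOn f (Ioi 0)) {x : ℝ} (hx : 0 < x)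
    (hsum : Summable fun n : ℕ ↦ ((n : ℝ) + 1)⁻¹ - ((n : ℝ) + x)⁻¹) :
    f x = f 1 + ∑' n : ℕ, (((n : ℝ) + 1)⁻¹ - ((n : ℝ) + x)⁻¹) := by
  have hsplit : ∀ n : ℕ, f x - f 1 =
      ∑ k ∈ Finset.range n, (((k : ℝ) + 1)⁻¹ - ((k : ℝ) + x)⁻¹) + (f (x + n) - f (1 + n)) := by
    intro n
    rw [add_natCast_eq_add_sum hrec hx, add_natCast_eq_add_sum hrec one_pos,
      Finset.sum_sub_distrib]
    ring
  have hlim := hsum.hasSum.tendsto_sum_nat.add (tendsto_sub_add_natCast hrec hmono hx one_pos)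
  rw [add_zero, ← funext hsplit] at hlim
  linarith [tendsto_nhds_unique tendsto_const_nhds hlim]

end MonotoneShift

theorem hasDerivAt_inv_sub_inv (a : ℝ) {y : ℝ} (hy : 0 < a + y) :
    HasDerivAt (fun z ↦ (a + 1)⁻¹ - (a + z)⁻¹) ((a + y) ^ 2)⁻¹ y := by
  simpa [neg_div, one_div] using (((hasDerivAt_id y).const_add a).inv hy.ne').const_sub (a + 1)⁻¹

theorem norm_inv_natCast_add_sq_le {c y : ℝ} (hc : 0 < c) (hcy : c < y) (n : ℕ) :
    ‖(((n : ℝ) + y) ^ 2)⁻¹‖ ≤ (((n : ℝ) + c) ^ 2)⁻¹ := by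
  have hy : 0 < y := hc.trans hcy
  rw [norm_inv, norm_pow, norm_of_nonneg (by positivity)]
  gcongr

theorem summable_inv_natCast_add_sq {c : ℝ} (hc : 0 < c) :
    Summable fun n : ℕ ↦ (((n : ℝ) + c) ^ 2)⁻¹ :=
  ((Real.summable_one_div_nat_add_rpow c 2).mpr one_lt_two).congr fun n ↦ by
    rw [abs_of_pos (by positivity), rpow_two, one_div]

theorem summable_inv_sub_inv {x : ℝ} (hx : 0 < x) :
    Summable fun n : ℕ ↦ ((n : ℝ) + 1)⁻¹ - ((n : ℝ) + x)⁻¹ := by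
  have hc : 0 < min x 1 / 2 := by positivity
  refine summable_of_summable_hasDerivAt_of_isPreconnected (summable_inv_natCast_add_sq hc)
    isOpen_Ioi isPreconnected_Ioi (fun n y hy ↦ hasDerivAt_inv_sub_inv n (by
      simp only [mem_Ioi] at hy; linarith [Nat.cast_nonneg (α := ℝ) n]))
    (fun n y hy ↦ norm_inv_natCast_add_sq_le hc hy n) (y₀ := 1) ?_ (by simp) ?_
  all_goals simp only [mem_Ioi]; linarith [min_le_left x 1, min_le_right x 1]

theorem hasDerivAt_tsum_inv_sub_inv {x : ℝ} (hx : 0 < x) :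
    HasDerivAt (fun y ↦ ∑' n : ℕ, (((n : ℝ) + 1)⁻¹ - ((n : ℝ) + y)⁻¹))
      (∑' n : ℕ, (((n : ℝ) + x) ^ 2)⁻¹) x := by
  have hc : 0 < min x 1 / 2 := by positivity
  refine hasDerivAt_tsum_of_isPreconnected (summable_inv_natCast_add_sq hc) isOpen_Ioi
    isPreconnected_Ioi (fun n y hy ↦ hasDerivAt_inv_sub_inv n (by
      simp only [mem_Ioi] at hy; linarith [Nat.cast_nonneg (α := ℝ) n]))
    (fun n y hy ↦ norm_inv_natCast_add_sq_le hc hy n) (y₀ := 1) ?_ (by simp) ?_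
  all_goals simp only [mem_Ioi]; linarith [min_le_left x 1, min_le_right x 1]

theorem gammaLogMoment_two_div_sub_digammaReal_sq {x : ℝ} (hx : 0 < x) :
    gammaLogMoment 2 x / Gamma x - digammaReal x ^ 2 = ∑' n : ℕ, (((n : ℝ) + x) ^ 2)⁻¹ := by
  have hseries : HasDerivAt digammaReal (∑' n : ℕ, (((n : ℝ) + x) ^ 2)⁻¹) x := by
    refine ((hasDerivAt_tsum_inv_sub_inv hx).const_add (digammaReal 1)).congr_of_eventuallyEq ?_
    filter_upwards [Ioi_mem_nhds hx] with y hy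
    exact eq_add_tsum_inv_sub_inv (fun _ ↦ digammaReal_add_one) monotoneOn_digammaReal hy
      (summable_inv_sub_inv hy)
  exact (hasDerivAt_digammaReal hx).unique hseries

theorem tsum_inv_natCast_add_sq (K : ℕ) :
    ∑' n : ℕ, (((n : ℝ) + K) ^ 2)⁻¹ =
      π ^ 2 / 6 - ∑ j ∈ Finset.Icc 1 (K - 1), 1 / (j : ℝ) ^ 2 := by
  have hsplit := hasSum_zeta_two.summable.sum_add_tsum_nat_add K
  rw [hasSum_zeta_two.tsum_eq] at hsplit
  have hIcc : Finset.Icc 1 (K - 1) = (Finset.range K).erase 0 := by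
    ext j
    simp only [Finset.mem_Icc, Finset.mem_erase, Finset.mem_range]
    omega
  rw [hIcc, Finset.sum_erase _ (by simp)]
  push_cast at hsplit
  simp only [one_div] at hsplit ⊢
  linarith

theorem integral_gammaMeasure {E : Type*} [NormedAddCommGroup E] [NormedSpace ℝ E]
    {a r : ℝ} (ha : 0 < a) (hr : 0 < r) (f : ℝ → E) :
    ∫ x, f x ∂gammaMeasure a r =
      (Gamma a)⁻¹ • ∫ t in Ioi 0, (t ^ (a - 1) * exp (-t)) • f (t / r) := by
  have hpdf : ∀ x ∈ Ioi (0 : ℝ),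
      gammaPDFReal a r x = r * (Gamma a)⁻¹ * ((r * x) ^ (a - 1) * exp (-(r * x))) := by
    intro x hx
    rw [gammaPDFReal, if_pos (le_of_lt hx), mul_rpow hr.le (le_of_lt hx), rpow_sub_one hr.ne']
    field_simp
  calc ∫ x, f x ∂gammaMeasure a r = ∫ x, gammaPDFReal a r x • f x := by
        rw [gammaMeasure, integral_withDensity_eq_integral_toReal_smul (f := gammaPDF a r)
          (measurable_gammaPDFReal a r).ennreal_ofReal (ae_of_all _ fun _ ↦ ENNReal.ofReal_lt_top)]
        simp only [gammaPDF, ENNReal.toReal_ofReal (gammaPDFReal_nonneg ha hr _)]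
    _ = ∫ x in Ici 0, gammaPDFReal a r x • f x := by
        refine (setIntegral_eq_integral_of_forall_compl_eq_zero fun x hx ↦ ?_).symm
        rw [gammaPDFReal, if_neg (mt mem_Ici.mpr hx), zero_smul]
    _ = ∫ x in Ioi 0,
          (r * (Gamma a)⁻¹) • (((r * x) ^ (a - 1) * exp (-(r * x))) • f ((r * x) / r)) := by
        rw [integral_Ici_eq_integral_Ioi]
        refine setIntegral_congr_fun measurableSet_Ioi fun x hx ↦ ?_
        rw [hpdf x hx, smul_smul, mul_div_cancel_left₀ x hr.ne']
    _ = _ := by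
        rw [integral_smul,
          integral_comp_mul_left_Ioi (fun t ↦ (t ^ (a - 1) * exp (-t)) • f (t / r)) 0 hr,
          mul_zero, smul_smul]
        congr 1
        field_simp

theorem integral_log_sub_pow_eq_sum {a : ℝ} (ha : 0 < a) (c : ℝ) (m : ℕ) :
    ∫ t in Ioi 0, t ^ (a - 1) * ((log t - c) ^ m * exp (-t)) =
      ∑ j ∈ Finset.range (m + 1), m.choose j * (-c) ^ (m - j) * gammaLogMoment j a := by
  simp only [gammaLogMoment, ← integral_const_mul]
  rw [← integral_finsetSum _ fun j _ ↦ (integrableOn_gammaLogMoment j ha).const_mul _]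
  refine setIntegral_congr_fun measurableSet_Ioi fun t _ ↦ ?_
  rw [sub_eq_add_neg (log t), add_pow, Finset.sum_mul, Finset.mul_sum]
  exact Finset.sum_congr rfl fun j _ ↦ by ring

theorem integral_log_pow_gammaMeasure {a r : ℝ} (ha : 0 < a) (hr : 0 < r) (m : ℕ) :
    ∫ x, log x ^ m ∂gammaMeasure a r =
      (Gamma a)⁻¹ *
        ∑ j ∈ Finset.range (m + 1), m.choose j * (-log r) ^ (m - j) * gammaLogMoment j a := by
  rw [integral_gammaMeasure ha hr, smul_eq_mul, ← integral_log_sub_pow_eq_sum ha]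
  congr 1
  refine setIntegral_congr_fun measurableSet_Ioi fun t ht ↦ ?_
  rw [smul_eq_mul, log_div (ne_of_gt ht) hr.ne']
  ring

theorem integral_log_gammaMeasure {a r : ℝ} (ha : 0 < a) (hr : 0 < r) :
    ∫ x, log x ∂gammaMeasure a r = digammaReal a - log r := by
  have h := integral_log_pow_gammaMeasure ha hr 1
  simp only [pow_one] at h
  rw [h, Finset.sum_range_succ, Finset.sum_range_one, Nat.choose_zero_right, Nat.choose_self,
    gammaLogMoment_zero ha, digammaReal]
  field_simp
  ring

theorem integral_log_sq_gammaMeasure {a r : ℝ} (ha : 0 < a) (hr : 0 < r) :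
    ∫ x, log x ^ 2 ∂gammaMeasure a r =
      gammaLogMoment 2 a / Gamma a - 2 * log r * digammaReal a + log r ^ 2 := by
  rw [integral_log_pow_gammaMeasure ha hr 2, Finset.sum_range_succ, Finset.sum_range_succ,
    Finset.sum_range_one, Nat.choose_zero_right, Nat.choose_one_right, Nat.choose_self,
    gammaLogMoment_zero ha, digammaReal]
  field_simp
  ring

theorem variance_log_gamma_general {Ω : Type*} [MeasurableSpace Ω] (μ : Measure Ω)
    (K : ℕ) (hK : 1 ≤ K) (S : Ω → ℝ) (hS : Measurable S)
    (hlaw : μ.map S = gammaMeasure K K) :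
    (∫ ω, (Real.log (S ω)) ^ 2 ∂μ) - (∫ ω, Real.log (S ω) ∂μ) ^ 2
      = Real.pi ^ 2 / 6 - ∑ j ∈ Finset.Icc 1 (K - 1), (1 : ℝ) / (j : ℝ) ^ 2 := by
  have hK0 : (0 : ℝ) < K := by exact_mod_cast hK
  have hmap : ∀ f : ℝ → ℝ, Measurable f → ∫ ω, f (S ω) ∂μ = ∫ x, f x ∂gammaMeasure K K :=
    fun f hf ↦ by rw [← hlaw, integral_map hS.aemeasurable hf.aestronglyMeasurable]
  rw [hmap (fun x ↦ log x ^ 2) (by fun_prop), hmap log measurable_log,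
    integral_log_sq_gammaMeasure hK0 hK0, integral_log_gammaMeasure hK0 hK0,
    ← tsum_inv_natCast_add_sq, ← gammaLogMoment_two_div_sub_digammaReal_sq hK0]
  ring

/-- If `S` is a real random variable with law `Gamma(K, K)` (`K` a positive integer), then the
variance of `log S` equals the trigamma value `ψ′(K) = π²/6 - ∑_{j=1}^{K-1} 1/j²`, i.e.
`E[(log S)²] - (E[log S])² = π²/6 - ∑_{j=1}^{K-1} 1/j²`. -/
theorem variance_log_gamma {Ω : Type*} [MeasurableSpace Ω] (μ : Measure Ω)
    [IsProbabilityMeasure μ] (K : ℕ) (hK : 1 ≤ K) (S : Ω → ℝ) (hS : Measurable S)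
    (hlaw : μ.map S = gammaMeasure K K) :
    (∫ ω, (Real.log (S ω)) ^ 2 ∂μ) - (∫ ω, Real.log (S ω) ∂μ) ^ 2
      = Real.pi ^ 2 / 6 - ∑ j ∈ Finset.Icc 1 (K - 1), (1 : ℝ) / (j : ℝ) ^ 2 :=
  variance_log_gamma_general μ K hK S hS hlaw
end

section
/- For all positive integers K and all integers N ≥ 2, (H_{K−1} − γ − log K)² > (H_{KN−1} − γ − log(KN))²; in other words, in the scalar case the intrinsic bias of a single Gamma(K,K) estimate, (ψ(K) − log K)², strictly exceeds the intrinsic bias of the sample mean of N such estimates, (ψ(KN) − log(KN))². -/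
lemma harmonicR_eq (m : ℕ) : harmonicR m = (harmonic m : ℝ) := by
  simp [harmonicR, harmonic, one_div]

lemma key (m : ℕ) (hm : 1 ≤ m) :
    harmonicR (m - 1) - Real.eulerMascheroniConstant - Real.log m
      = Real.eulerMascheroniSeq (m - 1) - Real.eulerMascheroniConstant := by
  have h : ((m - 1 : ℕ) : ℝ) + 1 = (m : ℝ) := by
    have := Nat.succ_pred_eq_of_pos hm
    exact_mod_cast congrArg (Nat.cast : ℕ → ℝ) this
  rw [Real.eulerMascheroniSeq, harmonicR_eq, h]
  ring

/-- For all positive integers `K` and all integers `N ≥ 2`,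
`(H_{K-1} - γ - log K)² > (H_{KN-1} - γ - log (KN))²`: in the scalar case the intrinsic bias of a
single `Gamma(K,K)` estimate strictly exceeds that of the sample mean of `N` such estimates. -/
theorem ibias_single_gt_ibias_mean_scalar (K N : ℕ) (hK : 1 ≤ K) (hN : 2 ≤ N) :
    (harmonicR (K - 1) - Real.eulerMascheroniConstant - Real.log K) ^ 2
      > (harmonicR (K * N - 1) - Real.eulerMascheroniConstant - Real.log (K * N)) ^ 2 := by
  have hKN : 1 ≤ K * N := le_trans hK (Nat.le_mul_of_pos_right K (by omega))
  have hcast : ((K * N : ℕ) : ℝ) = (K : ℝ) * N := by push_cast; ring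
  rw [key K hK]
  rw [show Real.log ((K : ℝ) * N) = Real.log ((K * N : ℕ) : ℝ) by rw [hcast]]
  rw [key (K * N) hKN]
  set a := Real.eulerMascheroniSeq (K - 1) - Real.eulerMascheroniConstant with ha
  set b := Real.eulerMascheroniSeq (K * N - 1) - Real.eulerMascheroniConstant with hb
  have hlt : a < b := by
    have : K - 1 < K * N - 1 := by
      have : K < K * N := by nlinarith [Nat.le_mul_of_pos_right K (show 0 < N by omega)]
      omega
    exact sub_lt_sub_right (Real.strictMono_eulerMascheroniSeq this) _
  have hb0 : b < 0 :=
    sub_neg.mpr (Real.eulerMascheroniSeq_lt_eulerMascheroniConstant _)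
  nlinarith
end

section
/- Let P₁ and P₂ be p×p positive definite Hermitian complex matrices and let L be an invertible p×p complex matrix. Then L P₁ Lᴴ and L P₂ Lᴴ are positive definite Hermitian, and the Riemannian distance is invariant under this congruence action: ‖log((L P₁ Lᴴ)^{−1/2} (L P₂ Lᴴ) (L P₁ Lᴴ)^{−1/2})‖_Fr = ‖log(P₁^{−1/2} P₂ P₁^{−1/2})‖_Fr. -/
open Matrix
open scoped ComplexOrder

/-- The matrix logarithm of a positive definite Hermitian matrix, via the continuous functional
calculus of the real logarithm. -/
noncomputable def matLog {p : ℕ} (A : Matrix (Fin p) (Fin p) ℂ) : Matrix (Fin p) (Fin p) ℂ :=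
  cfc Real.log A

/-- The inverse square root `P^{-1/2}` of a positive definite Hermitian matrix, via the
continuous functional calculus of `x ↦ (√x)⁻¹`. -/
noncomputable def invSqrt {p : ℕ} (A : Matrix (Fin p) (Fin p) ℂ) : Matrix (Fin p) (Fin p) ℂ :=
  cfc (fun x : ℝ => (Real.sqrt x)⁻¹) A

/-- The Frobenius norm of a complex matrix. -/
noncomputable def frobNorm {p : ℕ} (A : Matrix (Fin p) (Fin p) ℂ) : ℝ :=
  Real.sqrt (∑ i, ∑ j, ‖A i j‖ ^ 2)

/-!
Write `Q = L P₁ Lᴴ`. The matrix `U = Q^{-1/2} L P₁^{1/2}` is unitary, since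
`U Uᴴ = Q^{-1/2} (L P₁ Lᴴ) Q^{-1/2} = 1`, and it conjugates `P₁^{-1/2} X P₁^{-1/2}` into
`Q^{-1/2} (L X Lᴴ) Q^{-1/2}` for every `X`. The matrix logarithm commutes with unitary
conjugation and the Frobenius norm is unitarily invariant.
-/

section Sqrt

variable {A : Type*} [Ring A] [StarRing A] [TopologicalSpace A] [Algebra ℝ A]
  [ContinuousFunctionalCalculus ℝ A IsSelfAdjoint] {a : A}

lemma cfc_sqrt_mul_self (ha : IsSelfAdjoint a) (hspec : ∀ x ∈ spectrum ℝ a, 0 ≤ x) :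
    cfc Real.sqrt a * cfc Real.sqrt a = a := by
  rw [← cfc_mul Real.sqrt Real.sqrt a,
    cfc_congr (g := fun x => x) fun x hx => Real.mul_self_sqrt (hspec x hx), cfc_id' ℝ a]

lemma cfc_sqrt_mul_cfc_inv_sqrt (ha : IsSelfAdjoint a) (hspec : ∀ x ∈ spectrum ℝ a, 0 < x) :
    cfc Real.sqrt a * cfc (fun x => (Real.sqrt x)⁻¹) a = 1 := by
  have hcont : ContinuousOn (fun x => (Real.sqrt x)⁻¹) (spectrum ℝ a) :=
    Real.continuous_sqrt.continuousOn.inv₀ fun x hx => (Real.sqrt_pos.2 (hspec x hx)).ne'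
  rw [← cfc_mul _ _ a, cfc_congr (g := 1) fun x hx =>
    mul_inv_cancel₀ (Real.sqrt_pos.2 (hspec x hx)).ne', cfc_one ℝ a]

lemma cfc_inv_sqrt_mul_cfc_sqrt (ha : IsSelfAdjoint a) (hspec : ∀ x ∈ spectrum ℝ a, 0 < x) :
    cfc (fun x => (Real.sqrt x)⁻¹) a * cfc Real.sqrt a = 1 := by
  rw [← (cfc_commute_cfc _ _ a).eq, cfc_sqrt_mul_cfc_inv_sqrt ha hspec]

end Sqrt

lemma frobNorm_eq_sqrt_re_trace {p : ℕ} (A : Matrix (Fin p) (Fin p) ℂ) :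
    frobNorm A = Real.sqrt (Aᴴ * A).trace.re := by
  rw [frobNorm, trace, Complex.re_sum, Finset.sum_comm]
  congr 1
  refine Finset.sum_congr rfl fun j _ => ?_
  simp only [diag, mul_apply, conjTranspose_apply, Complex.re_sum]
  refine Finset.sum_congr rfl fun i _ => ?_
  rw [Complex.star_def, ← Complex.normSq_eq_conj_mul_self, Complex.normSq_eq_norm_sq]
  norm_cast

lemma frobNorm_unitary_conj {p : ℕ} {U : Matrix (Fin p) (Fin p) ℂ}
    (hU : U ∈ unitary (Matrix (Fin p) (Fin p) ℂ)) (M : Matrix (Fin p) (Fin p) ℂ) :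
    frobNorm (U * M * star U) = frobNorm M := by
  have hUU : star U * U = 1 := Unitary.star_mul_self_of_mem hU
  have hconj : star (U * M * star U) * (U * M * star U) = U * (star M * M) * star U := by
    simp only [star_mul, star_star, mul_assoc]
    rw [← mul_assoc (star U) U, hUU, one_mul]
  rw [frobNorm_eq_sqrt_re_trace, frobNorm_eq_sqrt_re_trace, ← star_eq_conjTranspose,
    ← star_eq_conjTranspose, hconj, trace_mul_cycle, ← mul_assoc, hUU, one_mul]

namespace Matrix

variable {n 𝕜 : Type*} [Fintype n] [DecidableEq n] [RCLike 𝕜]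

lemma PosDef.pos_of_mem_spectrum {A : Matrix n n 𝕜} (hA : A.PosDef) {x : ℝ}
    (hx : x ∈ spectrum ℝ A) : 0 < x := by
  obtain ⟨i, rfl⟩ := hA.isHermitian.spectrum_real_eq_range_eigenvalues ▸ hx
  exact hA.eigenvalues_pos i

lemma cfc_unitary_conj (f : ℝ → ℝ) {U : Matrix n n 𝕜} (hU : U ∈ unitary (Matrix n n 𝕜))
    (A : Matrix n n 𝕜) : cfc f (U * A * star U) = U * cfc f A * star U := by
  by_cases hA : IsSelfAdjoint A
  · exact (StarAlgHomClass.map_cfc (Unitary.conjStarAlgAut ℝ _ ⟨U, hU⟩) f A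
      (A.finite_real_spectrum.continuousOn f)
      (show Continuous fun B : Matrix n n 𝕜 => U * B * star U by fun_prop) hA
      (hA.conjugate U)).symm
  · have hUA : ¬IsSelfAdjoint (U * A * star U) := fun h => hA <| by
      simpa [← mul_assoc, mul_assoc _ _ U, Unitary.star_mul_self_of_mem hU] using h.conjugate' U
    rw [cfc_apply_of_not_predicate A hA, cfc_apply_of_not_predicate _ hUA, mul_zero, zero_mul]

section InvSqrt

variable {p : ℕ} {P : Matrix (Fin p) (Fin p) ℂ}

lemma isSelfAdjoint_invSqrt (A : Matrix (Fin p) (Fin p) ℂ) : IsSelfAdjoint (invSqrt A) :=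
  cfc_predicate _ _

lemma PosDef.invSqrt_mul_self_mul_invSqrt (hP : P.PosDef) :
    invSqrt P * P * invSqrt P = 1 := by
  have hspec : ∀ x ∈ spectrum ℝ P, 0 < x := fun _ => hP.pos_of_mem_spectrum
  have hRR : cfc Real.sqrt P * cfc Real.sqrt P = P :=
    cfc_sqrt_mul_self hP.isHermitian fun x hx => (hspec x hx).le
  calc invSqrt P * P * invSqrt P
      = invSqrt P * (cfc Real.sqrt P * cfc Real.sqrt P) * invSqrt P := by rw [hRR]
    _ = (invSqrt P * cfc Real.sqrt P) * (cfc Real.sqrt P * invSqrt P) := by noncomm_ring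
    _ = 1 := by
        rw [invSqrt, cfc_inv_sqrt_mul_cfc_sqrt hP.isHermitian hspec,
          cfc_sqrt_mul_cfc_inv_sqrt hP.isHermitian hspec, one_mul]

theorem PosDef.exists_unitary_conj_invSqrt_eq (hP : P.PosDef)
    {L : Matrix (Fin p) (Fin p) ℂ} (hL : IsUnit L) :
    ∃ U ∈ unitary (Matrix (Fin p) (Fin p) ℂ), ∀ X, U * (invSqrt P * X * invSqrt P) * star U =
      invSqrt (L * P * Lᴴ) * (L * X * Lᴴ) * invSqrt (L * P * Lᴴ) := by
  have hspec : ∀ x ∈ spectrum ℝ P, 0 < x := fun _ => hP.pos_of_mem_spectrum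
  set R := cfc Real.sqrt P
  set S := invSqrt P
  set T := invSqrt (L * P * Lᴴ)
  have hRR : R * R = P := cfc_sqrt_mul_self hP.isHermitian fun x hx => (hspec x hx).le
  have hRS : R * S = 1 := cfc_sqrt_mul_cfc_inv_sqrt hP.isHermitian hspec
  have hSR : S * R = 1 := cfc_inv_sqrt_mul_cfc_sqrt hP.isHermitian hspec
  have hTQT : T * (L * P * Lᴴ) * T = 1 :=
    (hP.mul_mul_conjTranspose_same (vecMul_injective_of_isUnit hL)).invSqrt_mul_self_mul_invSqrt
  have hstar : star (T * L * R) = R * Lᴴ * T := by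
    rw [star_mul, star_mul, (isSelfAdjoint_invSqrt _).star_eq,
      (cfc_predicate Real.sqrt P : IsSelfAdjoint R).star_eq, star_eq_conjTranspose, ← mul_assoc]
  refine ⟨T * L * R, ?_, fun X => ?_⟩
  · rw [mem_unitaryGroup_iff, hstar, ← hTQT, ← hRR]
    noncomm_ring
  · calc T * L * R * (S * X * S) * star (T * L * R)
        = T * (L * ((R * S) * X * (S * R)) * Lᴴ) * T := by rw [hstar]; noncomm_ring
      _ = T * (L * X * Lᴴ) * T := by rw [hRS, hSR, one_mul, mul_one]

end InvSqrt

end Matrix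

/-- Let `P₁`, `P₂` be `p × p` positive definite Hermitian complex matrices and `L` an invertible
`p × p` complex matrix. Then `L P₁ Lᴴ` and `L P₂ Lᴴ` are positive definite Hermitian, and the
Riemannian distance is invariant under this congruence action:
`‖log((L P₁ Lᴴ)^{-1/2} (L P₂ Lᴴ) (L P₁ Lᴴ)^{-1/2})‖_Fr = ‖log(P₁^{-1/2} P₂ P₁^{-1/2})‖_Fr`. -/
theorem riemannian_distance_congruence_invariant (p : ℕ)
    (P₁ P₂ L : Matrix (Fin p) (Fin p) ℂ) (h₁ : P₁.PosDef) (h₂ : P₂.PosDef) (hL : IsUnit L) :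
    (L * P₁ * Lᴴ).PosDef ∧ (L * P₂ * Lᴴ).PosDef ∧
    frobNorm (matLog
        (invSqrt (L * P₁ * Lᴴ) * (L * P₂ * Lᴴ) * invSqrt (L * P₁ * Lᴴ)))
      = frobNorm (matLog (invSqrt P₁ * P₂ * invSqrt P₁)) := by
  refine ⟨h₁.mul_mul_conjTranspose_same (vecMul_injective_of_isUnit hL),
    h₂.mul_mul_conjTranspose_same (vecMul_injective_of_isUnit hL), ?_⟩
  obtain ⟨U, hU, hconj⟩ := h₁.exists_unitary_conj_invSqrt_eq hL
  rw [← hconj, matLog, matLog, cfc_unitary_conj _ hU, frobNorm_unitary_conj hU]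
end
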